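/- For a continuous map f on a compact metric space, h_L^+(f) = lim_{ε→0} inf{h_L^+(f,U) : U a finite open cover with diam(U) < ε}, and the same holds for h_L^-. -/

import Mathlib

open Set Filter Topology Metric
open scoped ENNReal

/-- `U` is an open cover of `X`: a family of open sets whose union is `X`. -/
def IsOpenCover {X : Type*} [MetricSpace X] (U : Set (Set X)) : Prop :=
  (∀ A ∈ U, IsOpen A) ∧ ⋃₀ U = Set.univ

/-- The Lebesgue number of a cover `U`: the largest `δ` such that every open
ball of radius `δ` is contained in some element of `U`. -/
noncomputable def leb {X : Type*} [MetricSpace X] (U : Set (Set X)) : ℝ≥0∞ :=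
  sSup {δ : ℝ≥0∞ | ∀ x : X, ∃ A ∈ U, EMetric.ball x δ ⊆ A}

/-- The cover `{g⁻¹(A) : A ∈ U}`. -/
def preCov {X : Type*} (g : X → X) (U : Set (Set X)) : Set (Set X) :=
  (fun A => g ⁻¹' A) '' U

/-- The join `U ∨ V = {A ∩ B : A ∈ U, B ∈ V}` of two covers. -/
def covJoin {X : Type*} (U V : Set (Set X)) : Set (Set X) :=
  {S | ∃ A ∈ U, ∃ B ∈ V, S = A ∩ B}

/-- The cover `U_f^n = ⋁_{k=0}^{n-1} f^{-k}(U)`. -/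
def covSeq {X : Type*} (f : X → X) (U : Set (Set X)) (n : ℕ) : Set (Set X) :=
  {S | ∃ g : Fin n → Set X, (∀ k, g k ∈ U) ∧ S = ⋂ k : Fin n, (f^[(k : ℕ)]) ⁻¹' g k}

/-- `δ_n(f,U)`, the Lebesgue number of `U_f^n`. -/
noncomputable def lebN {X : Type*} [MetricSpace X] (f : X → X) (U : Set (Set X)) (n : ℕ) : ℝ≥0∞ :=
  leb (covSeq f U n)

/-- `h_L^+(f,U) = limsup_n -(1/n) log δ_n(f,U)`. -/
noncomputable def hLplus {X : Type*} [MetricSpace X] (f : X → X) (U : Set (Set X)) : EReal :=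
  Filter.limsup (fun n : ℕ => ((-Real.log ((lebN f U n).toReal) / n : ℝ) : EReal)) atTop

/-- `h_L^-(f,U) = liminf_n -(1/n) log δ_n(f,U)`. -/
noncomputable def hLminus {X : Type*} [MetricSpace X] (f : X → X) (U : Set (Set X)) : EReal :=
  Filter.liminf (fun n : ℕ => ((-Real.log ((lebN f U n).toReal) / n : ℝ) : EReal)) atTop

/-- `h_L^+(f)`: supremum over finite open covers. -/
noncomputable def hLplusSup {X : Type*} [MetricSpace X] (f : X → X) : EReal :=
  ⨆ (U : Set (Set X)) (_ : IsOpenCover U ∧ U.Finite), hLplus f U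

/-- `h_L^-(f)`: supremum over finite open covers. -/
noncomputable def hLminusSup {X : Type*} [MetricSpace X] (f : X → X) : EReal :=
  ⨆ (U : Set (Set X)) (_ : IsOpenCover U ∧ U.Finite), hLminus f U

/-- The diameter of a cover: supremum of diameters of its elements. -/
noncomputable def covDiam {X : Type*} [MetricSpace X] (U : Set (Set X)) : ℝ≥0∞ :=
  ⨆ A ∈ U, EMetric.diam A

/-- `U` refines `V`: every element of `U` is contained in some element of `V`. -/
def Refines {X : Type*} (U V : Set (Set X)) : Prop :=
  ∀ A ∈ U, ∃ B ∈ V, A ⊆ B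

/-- `N(γ)`: the minimal number of open `γ`-balls needed to cover `X`. -/
noncomputable def covN (X : Type*) [MetricSpace X] (γ : ℝ≥0∞) : ℕ :=
  sInf {n : ℕ | ∃ s : Finset X, s.card = n ∧ ⋃ x ∈ s, EMetric.ball x γ = Set.univ}

/-- `S(U)`: the smallest cardinality of a subcover of `U`. -/
noncomputable def covS {X : Type*} [MetricSpace X] (U : Set (Set X)) : ℕ :=
  sInf {m : ℕ | ∃ W ⊆ U, ⋃₀ W = Set.univ ∧ W.ncard = m}

/-- `s_n(f,ε)`: maximal cardinality of an `(n,ε)`-separated set. -/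
noncomputable def sep {X : Type*} [MetricSpace X] (f : X → X) (n : ℕ) (ε : ℝ) : ℕ :=
  sSup {m : ℕ | ∃ E : Finset X, E.card = m ∧
    ∀ x ∈ E, ∀ y ∈ E, x ≠ y → ∃ k < n, ε < dist (f^[k] x) (f^[k] y)}

/-- Topological entropy via `(n,ε)`-separated sets. -/
noncomputable def topEnt {X : Type*} [MetricSpace X] (f : X → X) : EReal :=
  ⨆ (ε : ℝ) (_ : 0 < ε),
    Filter.limsup (fun n : ℕ => ((Real.log (sep f n ε) / n : ℝ) : EReal)) atTop

/-- Upper box dimension of `X`. -/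
noncomputable def dimB (X : Type*) [MetricSpace X] : EReal :=
  Filter.limsup
    (fun γ : ℝ => ((Real.log (covN X (ENNReal.ofReal γ)) / -Real.log γ : ℝ) : EReal))
    (nhdsWithin (0:ℝ) (Set.Ioi 0))
/-!
If `diam U` is below the Lebesgue number of `V`, then `U` refines `V`, hence every join `U_f^n`
refines `V_f^n`, so `δ_n(f,U) ≤ δ_n(f,V)` and `h_L^±(f,V) ≤ h_L^±(f,U)`. Taking `V` with
`h_L^±(f,V)` close to the supremum, every cover of diameter below its Lebesgue number has at least
that entropy, and such covers exist at every scale.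

Because `log ⊤.toReal = log 0 = 0`, the comparison `-log δ_n(f,V) ≤ -log δ_n(f,U)` fails when
`δ_n(f,V) = ⊤`, but only by `diam X`; after dividing by `n` the error vanishes.
-/

section Covers

variable {X : Type*}

lemma covSeq_refines {f : X → X} {U V : Set (Set X)} (h : Refines U V) (n : ℕ) :
    Refines (covSeq f U n) (covSeq f V n) := by
  rintro A ⟨g, hg, rfl⟩
  choose r hrV hgr using h
  exact ⟨⋂ k : Fin n, f^[(k : ℕ)] ⁻¹' r (g k) (hg k),
    ⟨fun k => r (g k) (hg k), fun k => hrV _ _, rfl⟩,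
    iInter_mono fun k => preimage_mono (hgr _ _)⟩

variable [MetricSpace X]

lemma IsOpenCover.covSeq {f : X → X} (hf : Continuous f) {U : Set (Set X)} (hU : IsOpenCover U)
    (n : ℕ) : IsOpenCover (covSeq f U n) := by
  refine ⟨?_, eq_univ_of_forall fun x => ?_⟩
  · rintro A ⟨g, hg, rfl⟩
    exact isOpen_iInter_of_finite fun k => (hU.1 _ (hg k)).preimage (hf.iterate _)
  · have hcov (k : Fin n) : ∃ A ∈ U, f^[(k : ℕ)] x ∈ A := by
      rw [← mem_sUnion, hU.2]
      exact mem_univ _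
    choose g hgU hxg using hcov
    exact ⟨_, ⟨g, hgU, rfl⟩, mem_iInter.2 hxg⟩

lemma leb_mono {U V : Set (Set X)} (h : Refines U V) : leb U ≤ leb V := by
  refine sSup_le_sSup fun δ hδ x => ?_
  obtain ⟨A, hA, hball⟩ := hδ x
  obtain ⟨B, hB, hAB⟩ := h A hA
  exact ⟨B, hB, hball.trans hAB⟩

lemma leb_pos [CompactSpace X] {U : Set (Set X)} (hU : IsOpenCover U) : 0 < leb U := by
  obtain ⟨δ, hδ, hball⟩ :=
    lebesgue_number_lemma_of_metric_sUnion isCompact_univ hU.1 hU.2.symm.subset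
  refine (ENNReal.ofReal_pos.2 hδ).trans_le (le_sSup fun x => ?_)
  obtain ⟨A, hA, hsub⟩ := hball x (mem_univ x)
  exact ⟨A, hA, fun y hy => hsub (mem_ball.2 (edist_lt_ofReal.1 (mem_eball.1 hy)))⟩

lemma leb_eq_top_of_isEmpty [IsEmpty X] (U : Set (Set X)) : leb U = ⊤ :=
  top_unique (le_sSup fun x => isEmptyElim x)

/-- Once a ball of radius `δ > ediam X` lies in a member of `U`, that member is `X` itself. -/
lemma leb_le_ediam_univ_of_ne_top {U : Set (Set X)} (h : leb U ≠ ⊤) :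
    leb U ≤ ediam (univ : Set X) := by
  by_contra! hlt
  obtain ⟨δ, hδU, hδ⟩ := lt_sSup_iff.1 hlt
  refine h (top_unique (le_sSup fun x => ?_))
  obtain ⟨A, hA, hball⟩ := hδU x
  exact ⟨A, hA, fun y _ => hball (mem_eball.2
    ((edist_le_ediam_of_mem (mem_univ y) (mem_univ x)).trans_lt hδ))⟩

lemma toReal_leb_le_diam_univ [BoundedSpace X] (U : Set (Set X)) :
    (leb U).toReal ≤ diam (univ : Set X) := by
  rcases eq_or_ne (leb U) ⊤ with h | h
  · rw [h, ENNReal.toReal_top]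
    exact diam_nonneg
  · exact ENNReal.toReal_mono (Bornology.isBounded_univ.2 ‹_›).ediam_ne_top
      (leb_le_ediam_univ_of_ne_top h)

lemma log_toReal_leb_le_add_diam [CompactSpace X] {U V : Set (Set X)} (hU : IsOpenCover U)
    (h : leb U ≤ leb V) :
    Real.log (leb U).toReal ≤ Real.log (leb V).toReal + diam (univ : Set X) := by
  rcases eq_or_ne (leb V) ⊤ with hV | hV
  · rw [hV, ENNReal.toReal_top, Real.log_zero, zero_add]
    exact (Real.log_le_self ENNReal.toReal_nonneg).trans (toReal_leb_le_diam_univ U)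
  · have hlog : Real.log (leb U).toReal ≤ Real.log (leb V).toReal :=
      Real.log_le_log (ENNReal.toReal_pos (leb_pos hU).ne' (ne_top_of_le_ne_top hV h))
        (ENNReal.toReal_mono hV h)
    linarith [diam_nonneg (s := (univ : Set X))]

lemma refines_of_covDiam_lt_leb [Nonempty X] {U V : Set (Set X)} (h : covDiam U < leb V) :
    Refines U V := by
  obtain ⟨δ, hδV, hδ⟩ := lt_sSup_iff.1 h
  intro A hA
  rcases A.eq_empty_or_nonempty with rfl | ⟨a, ha⟩
  · obtain ⟨B, hB, -⟩ := hδV (Classical.arbitrary X)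
    exact ⟨B, hB, empty_subset B⟩
  · obtain ⟨B, hB, hball⟩ := hδV a
    have hdiam : ediam A ≤ covDiam U := le_iSup₂ (f := fun A (_ : A ∈ U) => ediam A) A hA
    exact ⟨B, hB, fun y hy => hball (mem_eball.2
      (((edist_le_ediam_of_mem hy ha).trans hdiam).trans_lt hδ))⟩

lemma lebN_le_of_covDiam_lt_leb {f : X → X} {U V : Set (Set X)} (h : covDiam U < leb V)
    (n : ℕ) : lebN f U n ≤ lebN f V n := by
  cases isEmpty_or_nonempty X
  · simp only [lebN, leb_eq_top_of_isEmpty, le_refl]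
  · exact leb_mono (covSeq_refines (refines_of_covDiam_lt_leb h) n)

lemma exists_isOpenCover_finite_covDiam_lt [CompactSpace X] {ε : ℝ} (hε : 0 < ε) :
    ∃ U : Set (Set X), IsOpenCover U ∧ U.Finite ∧ covDiam U < ENNReal.ofReal ε := by
  set r := ENNReal.ofReal (ε / 3)
  obtain ⟨t, htf, hcov⟩ :=
    EMetric.totallyBounded_iff.1 (isCompact_univ (X := X)).totallyBounded r (by positivity)
  refine ⟨(fun x => eball x r) '' t, ⟨?_, ?_⟩, htf.image _, ?_⟩
  · rintro A ⟨x, -, rfl⟩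
    exact isOpen_eball
  · rw [sUnion_image]
    exact univ_subset_iff.1 hcov
  · calc covDiam ((fun x => eball x r) '' t) ≤ 2 * r := iSup₂_le <| by
          rintro A ⟨x, -, rfl⟩
          exact ediam_eball_le
      _ = ENNReal.ofReal (2 * (ε / 3)) := by
          rw [ENNReal.ofReal_mul zero_le_two, ENNReal.ofReal_ofNat]
      _ < ENNReal.ofReal ε := (ENNReal.ofReal_lt_ofReal_iff hε).2 (by linarith)

end Covers

section Entropy

variable {X : Type*} [MetricSpace X]

noncomputable def lebRate (f : X → X) (U : Set (Set X)) (n : ℕ) : ℝ :=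
  -Real.log (lebN f U n).toReal / n

lemma lebRate_le_add [CompactSpace X] {f : X → X} (hf : Continuous f) {U V : Set (Set X)}
    (hU : IsOpenCover U) (hUV : ∀ n, lebN f U n ≤ lebN f V n) (n : ℕ) :
    lebRate f V n ≤ lebRate f U n + diam (univ : Set X) / n := by
  rw [lebRate, lebRate, ← add_div]
  have hlog :
      Real.log (lebN f U n).toReal ≤ Real.log (lebN f V n).toReal + diam (univ : Set X) :=
    log_toReal_leb_le_add_diam (hU.covSeq hf n) (hUV n)
  gcongr
  linarith

lemma tendsto_coe_div_natCast_atTop (c : ℝ) :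
    Tendsto (fun n : ℕ => ((c / n : ℝ) : EReal)) atTop (𝓝 0) :=
  EReal.tendsto_coe.2 (tendsto_const_div_atTop_nhds_zero_nat c)

lemma hLplus_le_of_lebN_le [CompactSpace X] {f : X → X} (hf : Continuous f) {U V : Set (Set X)}
    (hU : IsOpenCover U) (hUV : ∀ n, lebN f U n ≤ lebN f V n) :
    hLplus f V ≤ hLplus f U := by
  have herr := (tendsto_coe_div_natCast_atTop (diam (univ : Set X))).limsup_eq
  calc hLplus f V
      ≤ limsup ((fun n : ℕ => (lebRate f U n : EReal)) +
          fun n : ℕ => ((diam univ / n : ℝ) : EReal)) atTop :=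
        limsup_le_limsup (.of_forall fun n => by
          rw [Pi.add_apply, ← EReal.coe_add]
          exact EReal.coe_le_coe_iff.2 (lebRate_le_add hf hU hUV n))
    _ ≤ hLplus f U + 0 := by
        rw [← herr]
        exact EReal.limsup_add_le (.inr (by simp [herr])) (.inr (by simp [herr]))
    _ = hLplus f U := add_zero _

lemma hLminus_le_of_lebN_le [CompactSpace X] {f : X → X} (hf : Continuous f) {U V : Set (Set X)}
    (hU : IsOpenCover U) (hUV : ∀ n, lebN f U n ≤ lebN f V n) :
    hLminus f V ≤ hLminus f U := by
  have herr := (tendsto_coe_div_natCast_atTop (diam (univ : Set X))).limsup_eq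
  calc hLminus f V
      ≤ liminf ((fun n : ℕ => ((diam univ / n : ℝ) : EReal)) +
          fun n : ℕ => (lebRate f U n : EReal)) atTop :=
        liminf_le_liminf (.of_forall fun n => by
          rw [Pi.add_apply, ← EReal.coe_add, add_comm]
          exact EReal.coe_le_coe_iff.2 (lebRate_le_add hf hU hUV n))
    _ ≤ 0 + hLminus f U := by
        rw [← herr]
        exact EReal.liminf_add_le (.inl (by simp [herr])) (.inl (by simp [herr]))
    _ = hLminus f U := zero_add _

end Entropy

lemma tendsto_sInf_of_covDiam_lt_leb_imp_le {X : Type*} [MetricSpace X] [CompactSpace X]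
    (ent : Set (Set X) → EReal)
    (hent : ∀ U V, IsOpenCover U → IsOpenCover V → covDiam U < leb V → ent V ≤ ent U) :
    Tendsto
      (fun ε : ℝ => sInf {h : EReal | ∃ U : Set (Set X),
        IsOpenCover U ∧ U.Finite ∧ covDiam U < ENNReal.ofReal ε ∧ h = ent U})
      (𝓝[>] 0) (𝓝 (⨆ (U : Set (Set X)) (_ : IsOpenCover U ∧ U.Finite), ent U)) := by
  refine tendsto_order.2 ⟨fun l hl => ?_, fun u hu => ?_⟩
  · obtain ⟨V, hV, hlV⟩ : ∃ V, (IsOpenCover V ∧ V.Finite) ∧ l < ent V := by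
      simpa only [lt_iSup_iff, exists_prop] using hl
    have hsmall : ∀ᶠ ε : ℝ in 𝓝[>] 0, ENNReal.ofReal ε < leb V := by
      have hofReal : Tendsto ENNReal.ofReal (𝓝[>] 0) (𝓝 0) := by
        simpa using (ENNReal.continuous_ofReal.tendsto 0).mono_left nhdsWithin_le_nhds
      exact hofReal.eventually_lt_const (leb_pos hV.1)
    filter_upwards [hsmall] with ε hε
    refine hlV.trans_le (le_sInf ?_)
    rintro _ ⟨U, hU, -, hUε, rfl⟩
    exact hent U V hU hV.1 (hUε.trans hε)
  · filter_upwards [self_mem_nhdsWithin] with ε hε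
    obtain ⟨U, hU, hUf, hUε⟩ := exists_isOpenCover_finite_covDiam_lt (X := X) hε
    refine lt_of_le_of_lt (le_trans (sInf_le ⟨U, hU, hUf, hUε, rfl⟩) ?_) hu
    exact le_iSup₂ (f := fun U (_ : IsOpenCover U ∧ U.Finite) => ent U) U ⟨hU, hUf⟩

/-- `h_L^±(f) = lim_{ε→0} inf {h_L^±(f,U) : U finite open cover, diam U < ε}`. -/
theorem hL_eq_lim_inf_small_covers {X : Type*} [MetricSpace X] [CompactSpace X]
    (f : X → X) (hf : Continuous f) :
    Filter.Tendsto
      (fun ε : ℝ => sInf {h : EReal | ∃ U : Set (Set X),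
        IsOpenCover U ∧ U.Finite ∧ covDiam U < ENNReal.ofReal ε ∧ h = hLplus f U})
      (nhdsWithin (0:ℝ) (Set.Ioi 0)) (nhds (hLplusSup f)) ∧
    Filter.Tendsto
      (fun ε : ℝ => sInf {h : EReal | ∃ U : Set (Set X),
        IsOpenCover U ∧ U.Finite ∧ covDiam U < ENNReal.ofReal ε ∧ h = hLminus f U})
      (nhdsWithin (0:ℝ) (Set.Ioi 0)) (nhds (hLminusSup f)) :=
  ⟨tendsto_sInf_of_covDiam_lt_leb_imp_le (hLplus f) fun _ _ hU _ h =>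
      hLplus_le_of_lebN_le hf hU (lebN_le_of_covDiam_lt_leb h),
    tendsto_sInf_of_covDiam_lt_leb_imp_le (hLminus f) fun _ _ hU _ h =>
      hLminus_le_of_lebN_le hf hU (lebN_le_of_covDiam_lt_leb h)⟩
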